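/- arXiv:2204.01179 — 3 statements merged into one kernel-verified Lean document; each statement's English description precedes it below -/
import Mathlib

section
/- Let Y be a complete metric space (or Banach space), X ⊆ Y nonempty, and T : X → X an operator satisfying: there is α₀ ∈ (0, 1/2) such that for all U₁, U₂ ∈ X, d(T²U₂, T²U₁) ≤ α₀(d(TU₂, TU₁) + d(U₂, U₁)). Then for any U⁰ ∈ X, the iteration sequence V^{k+1} := T(V^k), V⁰ := T(U⁰), is a Cauchy sequence in Y. -/
open Filter

theorem stmt5 {Y : Type*} [MetricSpace Y] [CompleteSpace Y]
    (X : Set Y) (hX : X.Nonempty) (T : Y → Y) (hT : Set.MapsTo T X X)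
    (α₀ : ℝ) (h1 : 0 < α₀) (h2 : α₀ < 1/2)
    (hineq : ∀ U₁ ∈ X, ∀ U₂ ∈ X,
      dist (T (T U₂)) (T (T U₁)) ≤ α₀ * (dist (T U₂) (T U₁) + dist U₂ U₁))
    (U0 : Y) (hU0 : U0 ∈ X) (V : ℕ → Y)
    (hV0 : V 0 = T U0) (hVs : ∀ k, V (k + 1) = T (V k)) :
    CauchySeq V := by
  set s : ℝ := Real.sqrt (α₀ ^ 2 + 4 * α₀) with hs
  have hs2 : s ^ 2 = α₀ ^ 2 + 4 * α₀ := Real.sq_sqrt (by nlinarith)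
  have hs0 : 0 ≤ s := Real.sqrt_nonneg _
  set r : ℝ := (α₀ + s) / 2 with hr
  have hr0 : 0 < r := by
    have : α₀ ≤ s := by nlinarith
    positivity
  have hr1 : r < 1 := by nlinarith
  have hreq : r ^ 2 = α₀ * (r + 1) := by
    rw [hr]; nlinarith
  clear_value s r
  have hmem : ∀ n, V n ∈ X := by
    intro n
    induction n with
    | zero => rw [hV0]; exact hT hU0
    | succ k ih => rw [hVs]; exact hT ih
  set a : ℕ → ℝ := fun n => dist (V n) (V (n + 1)) with ha
  set C : ℝ := max (a 0) (a 1 / r) with hC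
  have ha0 : a 0 ≤ C * r ^ 0 := by rw [hC, pow_zero, mul_one]; exact le_max_left _ _
  have ha1 : a 1 ≤ C * r ^ 1 := by
    have h := le_max_right (a 0) (a 1 / r)
    rw [div_le_iff₀ hr0] at h
    rw [hC, pow_one]
    exact h
  have hstep : ∀ n, a (n + 2) ≤ α₀ * (a (n + 1) + a n) := by
    intro n
    have := hineq (V n) (hmem n) (V (n + 1)) (hmem (n + 1))
    rw [← hVs n, ← hVs (n + 1), ← hVs (n + 2)] at this
    simpa [ha, dist_comm] using this
  have key : ∀ n, a n ≤ C * r ^ n ∧ a (n + 1) ≤ C * r ^ (n + 1) := by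
    intro n
    induction n with
    | zero => exact ⟨ha0, ha1⟩
    | succ k ih =>
      refine ⟨ih.2, ?_⟩
      have h3 := hstep k
      have h4 : α₀ * (a (k + 1) + a k) ≤ α₀ * (C * r ^ (k + 1) + C * r ^ k) := by
        have := ih.1; have := ih.2; nlinarith
      have h5 : α₀ * (C * r ^ (k + 1) + C * r ^ k) = C * r ^ (k + 2) := by
        have : α₀ * (C * r ^ (k + 1) + C * r ^ k) = C * r ^ k * (α₀ * (r + 1)) := by ring
        rw [this, ← hreq]; ring
      calc a (k + 2) ≤ _ := h3
        _ ≤ _ := h4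
        _ = C * r ^ (k + 2) := h5
  exact cauchySeq_of_le_geometric r C hr1 (fun n => (key n).1)
end

section
/- Let X be a complete metric space and T : X → X a continuous map satisfying d(T²u, T²v) ≤ α₀(d(Tu, Tv) + d(u, v)) for all u, v ∈ X, with 0 < α₀ < 1/2. Then T has a unique fixed point in X. -/
theorem stmt6 {X : Type*} [MetricSpace X] [CompleteSpace X] [Nonempty X]
    (T : X → X) (hcont : Continuous T)
    (α₀ : ℝ) (h1 : 0 < α₀) (h2 : α₀ < 1/2)
    (hineq : ∀ u v : X, dist (T (T u)) (T (T v)) ≤ α₀ * (dist (T u) (T v) + dist u v)) :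
    ∃! u : X, T u = u := by
  obtain ⟨x₀⟩ := ‹Nonempty X›
  set r := Real.sqrt (2*α₀) with hrdef
  have hr0 : 0 < r := Real.sqrt_pos.2 (by linarith)
  have hr2 : r^2 = 2*α₀ := Real.sq_sqrt (by linarith)
  have hr1 : r < 1 := by nlinarith
  set f := fun n => T^[n] x₀ with hf
  set a := fun n => dist (f n) (f (n+1)) with ha
  have hstep : ∀ n, f (n+1) = T (f n) := fun n => Function.iterate_succ_apply' T n x₀
  set C := max (a 0) (a 1 / r) with hC
  have hC0 : 0 ≤ C := le_trans dist_nonneg (le_max_left _ _)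
  have key : ∀ n, a n ≤ C * r^n ∧ a (n+1) ≤ C * r^(n+1) := by
    intro n
    induction n with
    | zero =>
      constructor
      · have h := le_max_left (a 0) (a 1 / r)
        rw [pow_zero, mul_one]; exact h
      · have h := (div_le_iff₀ hr0).1 (le_max_right (a 0) (a 1 / r))
        rw [pow_one]; exact h
    | succ n ih =>
      obtain ⟨h1n, h2n⟩ := ih
      refine ⟨h2n, ?_⟩
      have hrec : a (n+2) ≤ α₀ * (a (n+1) + a n) := by
        have h := hineq (f n) (f (n+1))
        rw [← hstep n, ← hstep (n+1), ← hstep (n+1+1)] at h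
        exact h
      have hpow : (0:ℝ) ≤ r^n := le_of_lt (pow_pos hr0 n)
      have hr2' : r^(n+2) = 2*α₀ * r^n := by
        rw [pow_add, mul_comm]; ring_nf; nlinarith [hr2]
      calc a (n+1+1) ≤ α₀ * (a (n+1) + a n) := hrec
        _ ≤ α₀ * (C * r^(n+1) + C * r^n) := by nlinarith
        _ ≤ C * r^(n+1+1) := by
            have : r^(n+1) = r * r^n := by ring
            rw [this]
            have h2pow : r^(n+1+1) = 2*α₀ * r^n := hr2'
            rw [h2pow]
            nlinarith [mul_nonneg (mul_nonneg (le_of_lt h1) (by linarith : (0:ℝ) ≤ 1 - r)) (mul_nonneg hC0 hpow)]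
  have hcau : CauchySeq f := cauchySeq_of_le_geometric r C hr1 (fun n => (key n).1)
  obtain ⟨u, hu⟩ := cauchySeq_tendsto_of_complete hcau
  have hTu : T u = u := by
    have hshift : Filter.Tendsto (fun n => f (n+1)) Filter.atTop (nhds u) :=
      hu.comp (Filter.tendsto_add_atTop_nat 1)
    have h2' : Filter.Tendsto (fun n => T (f n)) Filter.atTop (nhds (T u)) :=
      (hcont.tendsto u).comp hu
    have h3 : Filter.Tendsto (fun n => f (n+1)) Filter.atTop (nhds (T u)) := by
      simpa [hstep] using h2'
    exact tendsto_nhds_unique h3 hshift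
  refine ⟨u, hTu, ?_⟩
  intro v hv
  have h := hineq v u
  rw [hv, hTu, hv, hTu] at h
  have : dist v u = 0 := by nlinarith [dist_nonneg (x := v) (y := u)]
  exact dist_eq_zero.1 this
end

section
/- Let Y be a Banach space, X ⊆ Y nonempty, T : X → X, and define X_∞ = {U ∈ Y : ∃ (U^k) ⊆ X, V ∈ Y, U^k → U and T(U^k) → V}. Assume the extension T̂ : X_∞ → Y defined by T̂(U) = lim T(U^k) is well-defined (independent of the approximating sequence), and assume there is α₀ ∈ (0, 1/2) with ‖T²U₂ − T²U₁‖ ≤ α₀(‖TU₂ − TU₁‖ + ‖U₂ − U₁‖) for all U₁, U₂ ∈ X. Then T̂(X_∞) ⊆ X_∞, T̂ satisfies the same two-step inequality on X_∞, and T̂ has a unique fixed point U_∞ ∈ X_∞. -/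
open Filter Topology

theorem stmt10 {Y : Type*} [NormedAddCommGroup Y] [NormedSpace ℝ Y] [CompleteSpace Y]
    (X : Set Y) (hX : X.Nonempty) (T : Y → Y) (hT : Set.MapsTo T X X)
    (Xinf : Set Y)
    (hXinf : Xinf = {U : Y | ∃ Uk : ℕ → Y, (∀ k, Uk k ∈ X) ∧
        Tendsto Uk atTop (𝓝 U) ∧ ∃ V : Y, Tendsto (fun k => T (Uk k)) atTop (𝓝 V)})
    (That : Y → Y)
    (hThat : ∀ U ∈ Xinf, ∀ Uk : ℕ → Y, (∀ k, Uk k ∈ X) → Tendsto Uk atTop (𝓝 U) →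
        ∀ V : Y, Tendsto (fun k => T (Uk k)) atTop (𝓝 V) → That U = V)
    (α₀ : ℝ) (h1 : 0 < α₀) (h2 : α₀ < 1/2)
    (hineq : ∀ U₁ ∈ X, ∀ U₂ ∈ X,
      ‖T (T U₂) - T (T U₁)‖ ≤ α₀ * (‖T U₂ - T U₁‖ + ‖U₂ - U₁‖)) :
    Set.MapsTo That Xinf Xinf ∧
    (∀ U₁ ∈ Xinf, ∀ U₂ ∈ Xinf,
      ‖That (That U₂) - That (That U₁)‖ ≤ α₀ * (‖That U₂ - That U₁‖ + ‖U₂ - U₁‖)) ∧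
    (∃! Uinf : Y, Uinf ∈ Xinf ∧ That Uinf = Uinf) := by
  -- Key lemma: for every U ∈ Xinf there is a sequence witnessing everything.
  have key : ∀ U ∈ Xinf, ∃ Uk : ℕ → Y, (∀ k, Uk k ∈ X) ∧
      Tendsto Uk atTop (𝓝 U) ∧
      Tendsto (fun k => T (Uk k)) atTop (𝓝 (That U)) ∧
      Tendsto (fun k => T (T (Uk k))) atTop (𝓝 (That (That U))) ∧
      That U ∈ Xinf := by
    intro U hU
    have hU' := hU
    rw [hXinf] at hU'
    obtain ⟨Uk, hmem, hUk, V, hV⟩ := hU'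
    have hTU : That U = V := hThat U hU Uk hmem hUk V hV
    -- T² ∘ Uk is Cauchy
    have hc : CauchySeq (fun k => T (T (Uk k))) := by
      rw [Metric.cauchySeq_iff]
      intro ε hε
      obtain ⟨N₁, hN₁⟩ := Metric.cauchySeq_iff.mp hUk.cauchySeq ε hε
      obtain ⟨N₂, hN₂⟩ := Metric.cauchySeq_iff.mp hV.cauchySeq ε hε
      refine ⟨max N₁ N₂, fun m hm n hn => ?_⟩
      have d1 := hN₁ m (le_trans (le_max_left _ _) hm) n (le_trans (le_max_left _ _) hn)
      have d2 := hN₂ m (le_trans (le_max_right _ _) hm) n (le_trans (le_max_right _ _) hn)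
      have hi := hineq (Uk n) (hmem n) (Uk m) (hmem m)
      rw [dist_eq_norm] at d1 d2 ⊢
      calc ‖T (T (Uk m)) - T (T (Uk n))‖
          ≤ α₀ * (‖T (Uk m) - T (Uk n)‖ + ‖Uk m - Uk n‖) := hi
        _ < ε := by nlinarith [norm_nonneg (T (Uk m) - T (Uk n)), norm_nonneg (Uk m - Uk n)]
    obtain ⟨W, hW⟩ := cauchySeq_tendsto_of_complete hc
    have hmem' : ∀ k, T (Uk k) ∈ X := fun k => hT (hmem k)
    have hVXinf : That U ∈ Xinf := by
      rw [hXinf, hTU]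
      exact ⟨fun k => T (Uk k), hmem', hV, W, hW⟩
    have hVlim : Tendsto (fun k => T (Uk k)) atTop (𝓝 (That U)) := hTU ▸ hV
    have hW' : That (That U) = W :=
      hThat (That U) hVXinf (fun k => T (Uk k)) hmem' hVlim W hW
    exact ⟨Uk, hmem, hUk, hVlim, hW' ▸ hW, hVXinf⟩
  have maps : Set.MapsTo That Xinf Xinf := fun U hU => ((key U hU).choose_spec.2.2.2.2)
  -- the inequality on Xinf
  have hineq' : ∀ U₁ ∈ Xinf, ∀ U₂ ∈ Xinf,
      ‖That (That U₂) - That (That U₁)‖ ≤ α₀ * (‖That U₂ - That U₁‖ + ‖U₂ - U₁‖) := by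
    intro U₁ hU₁ U₂ hU₂
    obtain ⟨A, hAmem, hA0, hA1, hA2, _⟩ := key U₁ hU₁
    obtain ⟨B, hBmem, hB0, hB1, hB2, _⟩ := key U₂ hU₂
    refine le_of_tendsto_of_tendsto'
      (f := fun k => ‖T (T (B k)) - T (T (A k))‖)
      (g := fun k => α₀ * (‖T (B k) - T (A k)‖ + ‖B k - A k‖))
      ((hB2.sub hA2).norm) (((hB1.sub hA1).norm.add ((hB0.sub hA0).norm)).const_mul α₀)
      (fun k => hineq (A k) (hAmem k) (B k) (hBmem k))
  refine ⟨maps, hineq', ?_⟩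
  -- existence of the fixed point via iteration
  obtain ⟨U₀, hU₀⟩ := hX
  set u : ℕ → Y := fun k => T^[k] U₀ with hu
  have humem : ∀ k, u k ∈ X := by
    intro k
    induction k with
    | zero => simpa [hu] using hU₀
    | succ n ih => simpa [hu, Function.iterate_succ_apply'] using hT ih
  have hsucc : ∀ k, u (k + 1) = T (u k) := fun k => Function.iterate_succ_apply' T k U₀
  set q : ℝ := α₀ + 1/2 with hq
  have hq0 : 0 < q := by positivity
  have hq1 : q < 1 := by simp [hq]; linarith
  set a : ℕ → ℝ := fun k => ‖u (k + 1) - u k‖ with ha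
  set C : ℝ := max (a 0) (a 1 / q) with hC
  have hC0 : 0 ≤ C := le_trans (norm_nonneg _) (le_max_left _ _)
  have hrec : ∀ k, a (k + 2) ≤ α₀ * (a (k + 1) + a k) := by
    intro k
    have hi := hineq (u k) (humem k) (u (k + 1)) (humem (k + 1))
    simpa [ha, hsucc, hsucc (k+1), hsucc (k+2)] using hi
  have hbound : ∀ k, a k ≤ C * q ^ k := by
    intro k
    induction k using Nat.strong_induction_on with
    | _ k ih =>
      match k with
      | 0 => rw [pow_zero, mul_one]; exact le_max_left _ _
      | 1 =>
        have : a 1 / q ≤ C := le_max_right _ _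
        rw [div_le_iff₀ hq0] at this
        simpa [mul_comm] using this
      | (k + 2) =>
        have h₁ := ih (k + 1) (by omega)
        have h₂ := ih k (by omega)
        have hqq : α₀ * (q + 1) ≤ q ^ 2 := by
          simp only [hq]; nlinarith
        calc a (k + 2) ≤ α₀ * (a (k + 1) + a k) := hrec k
          _ ≤ α₀ * (C * q ^ (k + 1) + C * q ^ k) := by
              have := norm_nonneg (u (k + 1) - u k)
              nlinarith [pow_nonneg hq0.le k, pow_nonneg hq0.le (k+1)]
          _ = (α₀ * (q + 1)) * (C * q ^ k) := by ring
          _ ≤ q ^ 2 * (C * q ^ k) := by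
              have : 0 ≤ C * q ^ k := mul_nonneg hC0 (pow_nonneg hq0.le k)
              nlinarith
          _ = C * q ^ (k + 2) := by ring
  have hcauchy : CauchySeq u := by
    refine cauchySeq_of_le_geometric q C hq1 (fun n => ?_)
    rw [dist_eq_norm]
    simpa [ha, norm_sub_rev] using hbound n
  obtain ⟨Uinf, hUinf⟩ := cauchySeq_tendsto_of_complete hcauchy
  have hshift : Tendsto (fun k => u (k + 1)) atTop (𝓝 Uinf) :=
    hUinf.comp (tendsto_add_atTop_nat 1)
  have hTu : Tendsto (fun k => T (u k)) atTop (𝓝 Uinf) := by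
    simpa [hsucc] using hshift
  have hUXinf : Uinf ∈ Xinf := by
    rw [hXinf]; exact ⟨u, humem, hUinf, Uinf, hTu⟩
  have hfix : That Uinf = Uinf := hThat Uinf hUXinf u humem hUinf Uinf hTu
  refine ⟨Uinf, ⟨hUXinf, hfix⟩, ?_⟩
  rintro W ⟨hWXinf, hWfix⟩
  have hi := hineq' W hWXinf Uinf hUXinf
  rw [hfix, hfix, hWfix, hWfix] at hi
  have hnn : (0:ℝ) ≤ ‖Uinf - W‖ := norm_nonneg _
  have : ‖Uinf - W‖ = 0 := by nlinarith
  have := norm_sub_eq_zero_iff.mp this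
  exact this.symm ▸ rfl
end
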